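/- arXiv:0807.2598 — 3 statements merged into one kernel-verified Lean document; each statement's English description precedes it below -/
import Mathlib

section
/- Let p ≥ 2 and let ψ ∈ O_p satisfy |ψ₁₁| < 1. Then there exist orthogonal matrices h₁, k₁ ∈ O_{p−1} such that diag(1, h₁) · ψ · diag(1, k₁)ᵀ = ψ₀(ψ₁₁), where ψ₀(γ) is the p×p matrix [[γ, √(1−γ²)·ε₁ᵀ],[√(1−γ²)·ε₁, diag(−γ, I_{p−2})]] and ε₁ = (1,0,…,0)ᵀ ∈ ℝ^{p−1}. -/
/-! With `γ = ψ 0 0`, a Householder reflection `k` turns the tail of the first row of `ψ` into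
`√(1 - γ²) e₀`, so that `ψ diag(1, k)ᵀ` and `ψ₀(γ)` are orthogonal matrices with the same first
row. For any two orthogonal `A`, `B` with the same first row, the orthogonal matrix `A Bᵀ` has
first row and first column `e₀`, hence equals `diag(1, h)` with `h` orthogonal, and then
`diag(1, h) B = A`. -/

open MeasureTheory Matrix

/-- The (Borel = product) σ-algebra on real matrices. -/
instance matMeas (m n : ℕ) : MeasurableSpace (Matrix (Fin m) (Fin n) ℝ) := MeasurableSpace.pi

/-- `μ` is the Haar probability distribution on the orthogonal group `O_p`, viewed as a Borel
probability measure on the space of `p × p` real matrices which is concentrated on the set of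
orthogonal matrices and invariant under left and right translation by orthogonal matrices. -/
def IsHaarOrthogonal (p : ℕ) (μ : Measure (Matrix (Fin p) (Fin p) ℝ)) : Prop :=
  IsProbabilityMeasure μ ∧
  μ {A | A ∈ Matrix.orthogonalGroup (Fin p) ℝ} = 1 ∧
  (∀ g ∈ Matrix.orthogonalGroup (Fin p) ℝ, Measure.map (fun A => g * A) μ = μ) ∧
  (∀ g ∈ Matrix.orthogonalGroup (Fin p) ℝ, Measure.map (fun A => A * g) μ = μ)

/-- The density `f(x|p) = Γ(p/2)/(Γ(1/2)Γ((p-1)/2)) (1-x²)^((p-3)/2)` on `(-1,1)`,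
extended by `0` outside `(-1,1)`. -/
noncomputable def haarEntryDensity (p : ℕ) (x : ℝ) : ENNReal :=
  ENNReal.ofReal (if x ∈ Set.Ioo (-1 : ℝ) 1 then
    (Real.Gamma ((p : ℝ) / 2) / (Real.Gamma (1 / 2) * Real.Gamma (((p : ℝ) - 1) / 2))) *
      (1 - x ^ 2) ^ (((p : ℝ) - 3) / 2)
  else 0)

/-- `ν` is the uniform distribution on the unit sphere `S^{k-1} ⊆ ℝ^k`, viewed as the unique
rotation-invariant Borel probability measure on `ℝ^k` concentrated on the unit sphere. -/
def IsUniformOnSphere (k : ℕ) (ν : Measure (EuclideanSpace ℝ (Fin k))) : Prop :=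
  IsProbabilityMeasure ν ∧ ν {u | ‖u‖ = 1} = 1 ∧
  ∀ L : EuclideanSpace ℝ (Fin k) ≃ₗᵢ[ℝ] EuclideanSpace ℝ (Fin k), Measure.map L ν = ν

/-- The `(n+1) × (n+1)` block-diagonal matrix `diag(γ, Δ)` with scalar block `γ` and lower
block `Δ`. -/
def cornerBlock {n : ℕ} (γ : ℝ) (Δ : Matrix (Fin n) (Fin n) ℝ) :
    Matrix (Fin (n + 1)) (Fin (n + 1)) ℝ :=
  Matrix.of fun i j =>
    if hi : i = 0 then (if j = 0 then γ else 0)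
    else if hj : j = 0 then 0
    else Δ (i.pred hi) (j.pred hj)

/-- The matrix `ψ₀(γ)`: the `p × p` orthogonal matrix whose first row and first column both
equal `(γ, √(1-γ²), 0, …, 0)` and whose lower-right `(p-1) × (p-1)` block is
`diag(-γ, I_{p-2})` (here `p = n+2`). -/
noncomputable def psi0 (n : ℕ) (γ : ℝ) : Matrix (Fin (n + 2)) (Fin (n + 2)) ℝ :=
  Matrix.of fun i j =>
    if i = 0 then (if j = 0 then γ else if j = 1 then Real.sqrt (1 - γ ^ 2) else 0)
    else if i = 1 then (if j = 0 then Real.sqrt (1 - γ ^ 2) else if j = 1 then -γ else 0)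
    else if i = j then 1 else 0

/-- The reflection (Householder) matrix `I - 2 w wᵀ / (wᵀ w)`. -/
noncomputable def reflMatrix (p : ℕ) (w : Fin p → ℝ) : Matrix (Fin p) (Fin p) ℝ :=
  1 - (2 / (w ⬝ᵥ w)) • Matrix.vecMulVec w w

section CornerBlock

variable {n : ℕ}

@[simp] lemma cornerBlock_apply_zero_zero (γ : ℝ) (Δ : Matrix (Fin n) (Fin n) ℝ) :
    cornerBlock γ Δ 0 0 = γ := by
  simp [cornerBlock]

@[simp] lemma cornerBlock_apply_zero_succ (γ : ℝ) (Δ : Matrix (Fin n) (Fin n) ℝ) (j : Fin n) :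
    cornerBlock γ Δ 0 j.succ = 0 := by
  simp [cornerBlock]

@[simp] lemma cornerBlock_apply_succ_zero (γ : ℝ) (Δ : Matrix (Fin n) (Fin n) ℝ) (i : Fin n) :
    cornerBlock γ Δ i.succ 0 = 0 := by
  simp [cornerBlock]

@[simp] lemma cornerBlock_apply_succ_succ (γ : ℝ) (Δ : Matrix (Fin n) (Fin n) ℝ) (i j : Fin n) :
    cornerBlock γ Δ i.succ j.succ = Δ i j := by
  simp [cornerBlock]

lemma cornerBlock_injective (γ : ℝ) : Function.Injective (cornerBlock (n := n) γ) :=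
  fun Δ Δ' h => Matrix.ext fun i j => by
    simpa using congrFun (congrFun h i.succ) j.succ

lemma cornerBlock_transpose (γ : ℝ) (Δ : Matrix (Fin n) (Fin n) ℝ) :
    (cornerBlock γ Δ)ᵀ = cornerBlock γ Δᵀ := by
  ext i j
  cases i using Fin.cases <;> cases j using Fin.cases <;> simp

lemma cornerBlock_mul (γ δ : ℝ) (A B : Matrix (Fin n) (Fin n) ℝ) :
    cornerBlock γ A * cornerBlock δ B = cornerBlock (γ * δ) (A * B) := by
  ext i j
  rw [mul_apply, Fin.sum_univ_succ]
  cases i using Fin.cases <;> cases j using Fin.cases <;> simp [mul_apply]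

lemma cornerBlock_one_one : cornerBlock (n := n) 1 1 = 1 := by
  ext i j
  cases i using Fin.cases <;> cases j using Fin.cases <;> simp [one_apply, eq_comm]

lemma cornerBlock_one_mem_orthogonalGroup_iff {h : Matrix (Fin n) (Fin n) ℝ} :
    cornerBlock 1 h ∈ orthogonalGroup (Fin (n + 1)) ℝ ↔ h ∈ orthogonalGroup (Fin n) ℝ := by
  rw [mem_orthogonalGroup_iff, mem_orthogonalGroup_iff, cornerBlock_transpose, cornerBlock_mul,
    one_mul, ← cornerBlock_one_one, (cornerBlock_injective 1).eq_iff]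

lemma eq_cornerBlock_of_forall_apply_eq_zero (G : Matrix (Fin (n + 1)) (Fin (n + 1)) ℝ)
    (hrow : ∀ j : Fin n, G 0 j.succ = 0) (hcol : ∀ i : Fin n, G i.succ 0 = 0) :
    G = cornerBlock (G 0 0) (G.submatrix Fin.succ Fin.succ) := by
  ext i j
  cases i using Fin.cases <;> cases j using Fin.cases <;> simp [hrow, hcol]

lemma mul_cornerBlock_transpose_apply_zero {m : ℕ} (M : Matrix (Fin m) (Fin (n + 1)) ℝ)
    (γ : ℝ) (K : Matrix (Fin n) (Fin n) ℝ) (i : Fin m) :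
    (M * (cornerBlock γ K)ᵀ) i 0 = M i 0 * γ := by
  simp [mul_apply, Fin.sum_univ_succ]

lemma mul_cornerBlock_transpose_apply_succ {m : ℕ} (M : Matrix (Fin m) (Fin (n + 1)) ℝ)
    (γ : ℝ) (K : Matrix (Fin n) (Fin n) ℝ) (i : Fin m) (j : Fin n) :
    (M * (cornerBlock γ K)ᵀ) i j.succ = (K *ᵥ fun l => M i l.succ) j := by
  simp [mul_apply, Fin.sum_univ_succ, mulVec, dotProduct, mul_comm]

end CornerBlock

section Householder

variable {p : ℕ}

lemma reflMatrix_transpose (w : Fin p → ℝ) : (reflMatrix p w)ᵀ = reflMatrix p w := by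
  simp [reflMatrix, transpose_sub]

lemma reflMatrix_mem_orthogonalGroup {w : Fin p → ℝ} (hw : w ⬝ᵥ w ≠ 0) :
    reflMatrix p w ∈ orthogonalGroup (Fin p) ℝ := by
  rw [mem_orthogonalGroup_iff, reflMatrix_transpose, reflMatrix]
  have hsq : vecMulVec w w * vecMulVec w w = (w ⬝ᵥ w) • vecMulVec w w := by
    rw [vecMulVec_mul_vecMulVec, vecMulVec_smul]
  have hc : (2 / (w ⬝ᵥ w)) * (2 / (w ⬝ᵥ w)) * (w ⬝ᵥ w) = 2 * (2 / (w ⬝ᵥ w)) := by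
    field_simp
  rw [sub_mul, mul_sub, mul_sub, smul_mul_smul_comm, hsq, smul_smul, hc]
  simp only [mul_one, one_mul, two_mul, add_smul]
  abel

lemma reflMatrix_mulVec (w x : Fin p → ℝ) :
    reflMatrix p w *ᵥ x = x - ((2 / (w ⬝ᵥ w)) * (w ⬝ᵥ x)) • w := by
  rw [reflMatrix, sub_mulVec, one_mulVec, smul_mulVec, vecMulVec_mulVec, op_smul_eq_smul, smul_smul]

lemma reflMatrix_sub_mulVec_self {x y : Fin p → ℝ} (hxy : x ⬝ᵥ x = y ⬝ᵥ y)
    (hw : (x - y) ⬝ᵥ (x - y) ≠ 0) :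
    reflMatrix p (x - y) *ᵥ x = y := by
  have hww : (x - y) ⬝ᵥ (x - y) = 2 * ((x - y) ⬝ᵥ x) := by
    simp only [sub_dotProduct, dotProduct_sub, dotProduct_comm y x, hxy]
    ring
  have hx : (x - y) ⬝ᵥ x ≠ 0 := by
    intro h
    rw [h, mul_zero] at hww
    exact hw hww
  rw [reflMatrix_mulVec, hww, show 2 / (2 * ((x - y) ⬝ᵥ x)) * ((x - y) ⬝ᵥ x) = 1 by field_simp,
    one_smul, sub_sub_cancel]

lemma exists_mem_orthogonalGroup_mulVec_eq {x y : Fin p → ℝ} (hxy : x ⬝ᵥ x = y ⬝ᵥ y) :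
    ∃ H ∈ orthogonalGroup (Fin p) ℝ, H *ᵥ x = y := by
  by_cases hw : (x - y) ⬝ᵥ (x - y) = 0
  · rw [dotProduct_self_eq_zero, sub_eq_zero] at hw
    exact ⟨1, one_mem _, by rw [one_mulVec, hw]⟩
  · exact ⟨_, reflMatrix_mem_orthogonalGroup hw, reflMatrix_sub_mulVec_self hxy hw⟩

end Householder

section Psi0

lemma Fin.eq_zero_or_eq_one_or_eq_succ_succ {n : ℕ} (i : Fin (n + 2)) :
    i = 0 ∨ i = 1 ∨ ∃ k : Fin n, i = k.succ.succ := by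
  rcases Fin.eq_zero_or_eq_succ i with rfl | ⟨i, rfl⟩
  · exact .inl rfl
  rcases Fin.eq_zero_or_eq_succ i with rfl | ⟨k, rfl⟩
  · exact .inr (.inl rfl)
  · exact .inr (.inr ⟨k, rfl⟩)

variable {n : ℕ} {γ : ℝ}

@[simp] lemma psi0_apply_zero_zero : psi0 n γ 0 0 = γ := by
  simp [psi0]

@[simp] lemma psi0_apply_zero_one : psi0 n γ 0 1 = Real.sqrt (1 - γ ^ 2) := by
  simp [psi0]

@[simp] lemma psi0_apply_one_zero : psi0 n γ 1 0 = Real.sqrt (1 - γ ^ 2) := by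
  simp [psi0]

@[simp] lemma psi0_apply_one_one : psi0 n γ 1 1 = -γ := by
  simp [psi0]

@[simp] lemma psi0_apply_zero_succ_succ (k : Fin n) : psi0 n γ 0 k.succ.succ = 0 := by
  simp [psi0, Fin.succ_succ_ne_one]

@[simp] lemma psi0_apply_one_succ_succ (k : Fin n) : psi0 n γ 1 k.succ.succ = 0 := by
  simp [psi0, Fin.succ_succ_ne_one]

@[simp] lemma psi0_apply_succ_succ_zero (k : Fin n) : psi0 n γ k.succ.succ 0 = 0 := by
  simp [psi0, Fin.succ_succ_ne_one]

@[simp] lemma psi0_apply_succ_succ_one (k : Fin n) : psi0 n γ k.succ.succ 1 = 0 := by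
  simp [psi0, Fin.succ_succ_ne_one]

@[simp] lemma psi0_apply_succ_succ_succ_succ (k l : Fin n) :
    psi0 n γ k.succ.succ l.succ.succ = (1 : Matrix (Fin n) (Fin n) ℝ) k l := by
  simp [psi0, Fin.succ_succ_ne_one, one_apply]

lemma psi0_transpose : (psi0 n γ)ᵀ = psi0 n γ := by
  ext i j
  rcases i.eq_zero_or_eq_one_or_eq_succ_succ with rfl | rfl | ⟨k, rfl⟩ <;>
  rcases j.eq_zero_or_eq_one_or_eq_succ_succ with rfl | rfl | ⟨l, rfl⟩ <;>
  simp [one_apply, eq_comm]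

lemma psi0_mem_orthogonalGroup (hγ : γ ^ 2 ≤ 1) : psi0 n γ ∈ orthogonalGroup (Fin (n + 2)) ℝ := by
  have hs : Real.sqrt (1 - γ ^ 2) * Real.sqrt (1 - γ ^ 2) = 1 - γ ^ 2 :=
    Real.mul_self_sqrt (by linarith)
  rw [mem_orthogonalGroup_iff, psi0_transpose]
  ext i j
  rw [mul_apply, Fin.sum_univ_succ, Fin.sum_univ_succ, Fin.succ_zero_eq_one]
  rcases i.eq_zero_or_eq_one_or_eq_succ_succ with rfl | rfl | ⟨k, rfl⟩ <;>
  rcases j.eq_zero_or_eq_one_or_eq_succ_succ with rfl | rfl | ⟨l, rfl⟩ <;>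
  simp [one_apply, hs, Fin.succ_succ_ne_one, (Fin.succ_succ_ne_one _).symm,
    (Fin.succ_ne_zero _).symm] <;> ring

end Psi0

lemma exists_cornerBlock_mul_eq_of_row_zero_eq {n : ℕ}
    {A B : Matrix (Fin (n + 1)) (Fin (n + 1)) ℝ}
    (hA : A ∈ orthogonalGroup (Fin (n + 1)) ℝ) (hB : B ∈ orthogonalGroup (Fin (n + 1)) ℝ)
    (hrow : A 0 = B 0) :
    ∃ h ∈ orthogonalGroup (Fin n) ℝ, cornerBlock 1 h * B = A := by
  set G := A * Bᵀ with hGdef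
  have hG : G ∈ orthogonalGroup (Fin (n + 1)) ℝ := mul_mem hA (Unitary.star_mem hB)
  have hGrow : ∀ j, G 0 j = (1 : Matrix (Fin (n + 1)) (Fin (n + 1)) ℝ) 0 j := fun j => by
    rw [← (mem_orthogonalGroup_iff ..).mp hB, hGdef]
    simp only [mul_apply, transpose_apply, hrow]
  have hGcol : ∀ i, G i 0 = (1 : Matrix (Fin (n + 1)) (Fin (n + 1)) ℝ) i 0 := fun i => by
    rw [← (mem_orthogonalGroup_iff ..).mp hA, hGdef]
    simp only [mul_apply, transpose_apply, hrow]
  have hGcorner : G = cornerBlock 1 (G.submatrix Fin.succ Fin.succ) := by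
    simpa [hGrow] using eq_cornerBlock_of_forall_apply_eq_zero G
      (by simp [hGrow, one_apply, (Fin.succ_ne_zero _).symm]) (by simp [hGcol, one_apply])
  refine ⟨G.submatrix Fin.succ Fin.succ, ?_, ?_⟩
  · rwa [← cornerBlock_one_mem_orthogonalGroup_iff, ← hGcorner]
  · rw [← hGcorner, hGdef, mul_assoc, (mem_orthogonalGroup_iff' ..).mp hB, mul_one]

lemma exists_mem_orthogonalGroup_row_zero_eq_psi0 {n : ℕ}
    {ψ : Matrix (Fin (n + 2)) (Fin (n + 2)) ℝ}
    (hψ : ψ ∈ orthogonalGroup (Fin (n + 2)) ℝ) :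
    ∃ k ∈ orthogonalGroup (Fin (n + 1)) ℝ, (ψ * (cornerBlock 1 k)ᵀ) 0 = psi0 n (ψ 0 0) 0 := by
  set u : Fin (n + 1) → ℝ := fun j => ψ 0 j.succ
  have hnorm : ψ 0 0 ^ 2 + u ⬝ᵥ u = 1 := by
    have h := congrFun (congrFun ((mem_orthogonalGroup_iff ..).mp hψ) 0) 0
    rw [mul_apply, Fin.sum_univ_succ] at h
    simpa [sq, dotProduct] using h
  have hu : u ⬝ᵥ u = Real.sqrt (1 - ψ 0 0 ^ 2) * Real.sqrt (1 - ψ 0 0 ^ 2) := by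
    rw [Real.mul_self_sqrt (by linarith [star_trivial u ▸ dotProduct_self_star_nonneg u])]
    linarith
  obtain ⟨k, hk, hku⟩ := exists_mem_orthogonalGroup_mulVec_eq (x := u)
    (y := Real.sqrt (1 - ψ 0 0 ^ 2) • Pi.single 0 1) (by simp [hu])
  refine ⟨k, hk, funext fun j => ?_⟩
  rcases j.eq_zero_or_eq_one_or_eq_succ_succ with rfl | rfl | ⟨l, rfl⟩
  · simp [mul_cornerBlock_transpose_apply_zero]
  · rw [← Fin.succ_zero_eq_one, mul_cornerBlock_transpose_apply_succ, hku]
    simp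
  · rw [mul_cornerBlock_transpose_apply_succ, hku]
    simp

theorem exists_reduction_to_cross_section_general (n : ℕ)
    (ψ : Matrix (Fin (n + 2)) (Fin (n + 2)) ℝ)
    (hψ : ψ ∈ Matrix.orthogonalGroup (Fin (n + 2)) ℝ) :
    ∃ h₁ k₁ : Matrix (Fin (n + 1)) (Fin (n + 1)) ℝ,
      h₁ ∈ Matrix.orthogonalGroup (Fin (n + 1)) ℝ ∧
      k₁ ∈ Matrix.orthogonalGroup (Fin (n + 1)) ℝ ∧
      cornerBlock 1 h₁ * ψ * (cornerBlock 1 k₁)ᵀ = psi0 n (ψ 0 0) := by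
  obtain ⟨k, hk, hrow⟩ := exists_mem_orthogonalGroup_row_zero_eq_psi0 hψ
  have hγ : ψ 0 0 ^ 2 ≤ 1 :=
    (sq_le_one_iff_abs_le_one _).mpr (entry_norm_bound_of_unitary hψ 0 0)
  have hψk : ψ * (cornerBlock 1 k)ᵀ ∈ orthogonalGroup (Fin (n + 2)) ℝ :=
    mul_mem hψ (Unitary.star_mem (cornerBlock_one_mem_orthogonalGroup_iff.mpr hk))
  obtain ⟨h, hh, hmul⟩ :=
    exists_cornerBlock_mul_eq_of_row_zero_eq (psi0_mem_orthogonalGroup hγ) hψk hrow.symm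
  exact ⟨h, k, hh, hk, by rw [mul_assoc, hmul]⟩

/-- Proposition 2.1.  Let `p = n+2 ≥ 2` and let `ψ ∈ O_p` with `|ψ₁₁| < 1`.
Then there exist `h₁, k₁ ∈ O_{p-1}` with `diag(1,h₁) · ψ · diag(1,k₁)ᵀ = ψ₀(ψ₁₁)`. -/
theorem exists_reduction_to_cross_section (n : ℕ)
    (ψ : Matrix (Fin (n + 2)) (Fin (n + 2)) ℝ)
    (hψ : ψ ∈ Matrix.orthogonalGroup (Fin (n + 2)) ℝ) (h11 : |ψ 0 0| < 1) :
    ∃ h₁ k₁ : Matrix (Fin (n + 1)) (Fin (n + 1)) ℝ,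
      h₁ ∈ Matrix.orthogonalGroup (Fin (n + 1)) ℝ ∧
      k₁ ∈ Matrix.orthogonalGroup (Fin (n + 1)) ℝ ∧
      cornerBlock 1 h₁ * ψ * (cornerBlock 1 k₁)ᵀ = psi0 n (ψ 0 0) :=
  exists_reduction_to_cross_section_general n ψ hψ
end

section
/- Let G be a compact metrizable topological group acting continuously and transitively on Polish spaces X and Y with open orbit maps, let t : X → Y be a continuous surjective equivariant map (t(g•x) = g•t(x)), let P be the G-invariant Borel probability measure on X, and let Q = t⁎P. Then there exists a Markov kernel R from Y to X (a measurable family y ↦ R(·|y) of Borel probability measures on X) such that: (i) R(g•B | g•y) = R(B | y) for all Borel B ⊆ X, g ∈ G, y ∈ Y; (ii) R(t⁻¹({y}) | y) = 1 for all y ∈ Y; and (iii) for every bounded Borel measurable f : X → ℝ, ∫_Y ∫_X f(x) R(dx|y) Q(dy) = ∫_X f(x) P(dx). In particular, R is a regular conditional distribution of X given t(X) = y when X has law P. -/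
/-!
Disintegrating the law of `(t x, x)` under `P` gives a kernel `κ` from `Y` to `X` with
`κ ∘ₘ Q = P` and `κ y (t⁻¹{y}) = 1` for `Q`-almost every `y`, but `κ` need not be equivariant.
Averaging its translates against a right-invariant probability measure `ν` on `G` (the
inverse of the normalised Haar measure), `R y = ∫ g⁻¹ • κ (g • y) dν(g)`, gives an equivariant
kernel which keeps `R ∘ₘ Q = P` because `P` and `Q` are invariant. The fibre property now holds
at every `y`: by transitivity each orbit map `g ↦ g • y` pushes `ν` to `Q`, so the `g` for
which `g • y` lies in the exceptional `Q`-null set form a `ν`-null set.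
-/

open MeasureTheory ProbabilityTheory Pointwise

lemma exists_isProbabilityMeasure_isMulRightInvariant (G : Type*) [TopologicalSpace G] [Group G]
    [IsTopologicalGroup G] [CompactSpace G] [MeasurableSpace G] [BorelSpace G] :
    ∃ ν : Measure G, IsProbabilityMeasure ν ∧ ν.IsMulRightInvariant := by
  let μ := Measure.haarMeasure (⊤ : TopologicalSpace.PositiveCompacts G)
  have hμ : μ Set.univ = 1 := Measure.haarMeasure_self
  refine ⟨μ.inv, ⟨?_⟩, inferInstance⟩
  rw [Measure.inv_apply, Set.inv_univ, hμ]

section OrbitMap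

variable {G Y : Type*} [Group G] [MeasurableSpace G] [MeasurableMul G] [MeasurableSpace Y]
  [MulAction G Y] [MeasurableSMul₂ G Y]

lemma map_smul_const_smul_eq (ν : Measure G) [ν.IsMulRightInvariant] (h : G) (y : Y) :
    ν.map (· • h • y) = ν.map (· • y) := by
  have : (fun g : G => g • h • y) = (fun g => g • y) ∘ (· * h) := by
    funext g
    simp [mul_smul]
  rw [this, ← Measure.map_map (measurable_smul_const y) (measurable_mul_const h),
    map_mul_right_eq_self]

/-- Both sides are the image of `ν × Q` under the action map: slicing along `G` uses the
invariance of `Q`, slicing along `Y` uses that all orbit maps push `ν` to the same measure. -/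
lemma map_smul_const_eq [MulAction.IsPretransitive G Y] (ν : Measure G)
    [IsProbabilityMeasure ν] [ν.IsMulRightInvariant] (Q : Measure Y) [IsProbabilityMeasure Q]
    [SMulInvariantMeasure G Y Q] (y : Y) : ν.map (· • y) = Q := by
  ext A hA
  have hA' : MeasurableSet ((fun p : G × Y => p.1 • p.2) ⁻¹' A) := measurable_smul hA
  have horbit : ∀ y', ν.map (· • y') = ν.map (· • y) := by
    intro y'
    obtain ⟨h, rfl⟩ := MulAction.exists_smul_eq G y y'
    exact map_smul_const_smul_eq ν h y
  calc ν.map (· • y) A = ∫⁻ y', ν.map (· • y') A ∂Q := by simp [horbit]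
    _ = (ν.prod Q) ((fun p : G × Y => p.1 • p.2) ⁻¹' A) := by
      rw [Measure.prod_apply_symm hA']
      refine lintegral_congr fun y' => ?_
      rw [Measure.map_apply (measurable_smul_const y') hA]
      rfl
    _ = ∫⁻ g, Q ((g • ·) ⁻¹' A) ∂ν := Measure.prod_apply hA'
    _ = Q A := by simp [measure_preimage_smul]

end OrbitMap

namespace ProbabilityTheory.Kernel

variable {G X Y : Type*} [Group G] [MeasurableSpace G] [MeasurableInv G]
  [MeasurableSpace X] [MeasurableSpace Y] [MulAction G X] [MulAction G Y]
  [MeasurableSMul₂ G X] [MeasurableSMul₂ G Y]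

variable (G) in
noncomputable def smulConj (κ : Kernel Y X) : Kernel (Y × G) X :=
  (deterministic Prod.snd measurable_snd ×ₖ
      κ.comap (fun p : Y × G => p.2 • p.1) (by fun_prop)).map
    fun q : G × X => q.1⁻¹ • q.2

lemma smulConj_apply (κ : Kernel Y X) [IsSFiniteKernel κ] (y : Y) (g : G) {B : Set X}
    (hB : MeasurableSet B) : smulConj G κ (y, g) B = κ (g • y) (g • B) := by
  have hB' : MeasurableSet ((fun q : G × X => q.1⁻¹ • q.2) ⁻¹' B) := (by fun_prop : Measurable _) hB
  rw [smulConj, map_apply' _ (by fun_prop) _ hB, prod_apply, deterministic_apply,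
    Measure.dirac_prod, Measure.map_apply measurable_prodMk_left hB', comap_apply]
  congr 1
  ext x
  simp [Set.mem_smul_set_iff_inv_smul_mem]

instance (κ : Kernel Y X) [IsSFiniteKernel κ] : IsSFiniteKernel (smulConj G κ) := by
  unfold smulConj
  infer_instance

instance (κ : Kernel Y X) [IsMarkovKernel κ] : IsMarkovKernel (smulConj G κ) :=
  IsMarkovKernel.map _ (by fun_prop)

/-- The average `y ↦ ∫ g⁻¹ • κ (g • y) dν(g)` of the translates of `κ`. -/
noncomputable def smulAverage (ν : Measure G) (κ : Kernel Y X) : Kernel Y X :=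
  (const Y ν ⊗ₖ smulConj G κ).snd

variable {ν : Measure G} {κ : Kernel Y X}

instance [IsProbabilityMeasure ν] [IsMarkovKernel κ] : IsMarkovKernel (smulAverage ν κ) := by
  unfold smulAverage
  infer_instance

lemma smulAverage_apply [SFinite ν] [IsSFiniteKernel κ] (y : Y) {B : Set X}
    (hB : MeasurableSet B) : smulAverage ν κ y B = ∫⁻ g, κ (g • y) (g • B) ∂ν := by
  rw [smulAverage, snd_apply' _ _ hB, compProd_apply (measurable_snd hB), const_apply]
  exact lintegral_congr fun g => smulConj_apply κ y g hB

lemma smulAverage_smul_apply [MeasurableMul G] [SFinite ν] [ν.IsMulRightInvariant]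
    [IsSFiniteKernel κ] (h : G) (y : Y) {B : Set X} (hB : MeasurableSet B) :
    smulAverage ν κ (h • y) (h • B) = smulAverage ν κ y B := by
  rw [smulAverage_apply _ (hB.const_smul h), smulAverage_apply _ hB]
  simp_rw [smul_smul]
  exact lintegral_mul_right_eq_self (fun g => κ (g • y) (g • B)) h

lemma smulAverage_apply_preimage_singleton [MeasurableSingletonClass Y] [IsProbabilityMeasure ν]
    [IsSFiniteKernel κ] {t : X → Y} (ht : Measurable t)
    (ht_smul : ∀ (g : G) x, t (g • x) = g • t x) (y : Y)
    (hκ : ∀ᵐ y' ∂ν.map (· • y), κ y' (t ⁻¹' {y'}) = 1) :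
    smulAverage ν κ y (t ⁻¹' {y}) = 1 := by
  have hfiber : ∀ g : G, g • t ⁻¹' {y} = t ⁻¹' {g • y} := by
    intro g
    ext x
    simp [Set.mem_smul_set_iff_inv_smul_mem, ht_smul, inv_smul_eq_iff]
  have hκ' := ae_of_ae_map (measurable_smul_const y).aemeasurable hκ
  rw [smulAverage_apply _ (ht (measurableSet_singleton y)),
    lintegral_congr_ae (hκ'.mono fun g hg => by rw [hfiber, hg])]
  simp

lemma smulAverage_comp [IsProbabilityMeasure ν] [IsSFiniteKernel κ] {Q : Measure Y} [SFinite Q]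
    [SMulInvariantMeasure G Y Q] {P : Measure X} [SMulInvariantMeasure G X P]
    (h : κ ∘ₘ Q = P) : smulAverage ν κ ∘ₘ Q = P := by
  ext B hB
  have hslice : ∀ g : G, ∫⁻ y, κ (g • y) (g • B) ∂Q = P (g • B) := by
    intro g
    rw [(measurePreserving_smul g Q).lintegral_comp (κ.measurable_coe (hB.const_smul g)), ← h,
      Measure.bind_apply (hB.const_smul g) κ.aemeasurable]
  calc (smulAverage ν κ ∘ₘ Q) B = ∫⁻ y, ∫⁻ g, smulConj G κ (y, g) B ∂ν ∂Q := by
        rw [Measure.bind_apply hB (Kernel.aemeasurable _)]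
        simp_rw [smulAverage_apply _ hB, smulConj_apply κ _ _ hB]
    _ = ∫⁻ g, ∫⁻ y, smulConj G κ (y, g) B ∂Q ∂ν :=
        lintegral_lintegral_swap ((smulConj G κ).measurable_coe hB).aemeasurable
    _ = P B := by simp [smulConj_apply κ _ _ hB, hslice, measure_smul]

end ProbabilityTheory.Kernel

lemma ae_condDistrib_id_preimage_singleton {X Y : Type*} [MeasurableSpace X]
    [StandardBorelSpace X] [Nonempty X] [MeasurableSpace Y] [MeasurableEq Y] (P : Measure X)
    [IsFiniteMeasure P] {t : X → Y} (ht : Measurable t) :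
    ∀ᵐ y ∂P.map t, condDistrib id t P y (t ⁻¹' {y}) = 1 := by
  have hgraph : MeasurableSet {p : Y × X | t p.2 = p.1} :=
    measurableSet_eq_fun (ht.comp measurable_snd) measurable_fst
  have hjoint : ∀ᵐ p ∂(P.map t ⊗ₘ condDistrib id t P), t p.2 = p.1 := by
    rw [compProd_map_condDistrib aemeasurable_id,
      ae_map_iff (ht.prodMk measurable_id).aemeasurable hgraph]
    exact ae_of_all _ fun _ => rfl
  filter_upwards [(Measure.ae_compProd_iff hgraph).1 hjoint] with y hy
  exact (prob_compl_eq_zero_iff (ht (measurableSet_singleton y))).1 (ae_iff.1 hy)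

lemma integral_integral_eq_of_comp_eq {X Y E : Type*} [MeasurableSpace X] [MeasurableSpace Y]
    [NormedAddCommGroup E] [NormedSpace ℝ E] {Q : Measure Y} [SFinite Q] {R : Kernel Y X}
    [IsSFiniteKernel R] {P : Measure X} (h : R ∘ₘ Q = P) {f : X → E} (hf : Integrable f P) :
    ∫ y, ∫ x, f x ∂(R y) ∂Q = ∫ x, f x ∂P := by
  rw [← h, ← Measure.snd_compProd] at hf ⊢
  rw [Measure.snd, integral_map measurable_snd.aemeasurable hf.aestronglyMeasurable]
  exact (Measure.integral_compProd (hf.comp_measurable measurable_snd)).symm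

theorem exists_invariant_conditional_kernel_general (G X Y : Type*)
    [TopologicalSpace G] [Group G] [IsTopologicalGroup G] [CompactSpace G]
    [TopologicalSpace X] [PolishSpace X] [MeasurableSpace X] [BorelSpace X]
    [TopologicalSpace Y] [PolishSpace Y] [MeasurableSpace Y] [BorelSpace Y]
    [MulAction G X] [ContinuousSMul G X] [MulAction G Y] [ContinuousSMul G Y]
    (htransY : ∀ y₁ y₂ : Y, ∃ g : G, g • y₁ = y₂)
    (t : X → Y) (htc : Continuous t)
    (hequiv : ∀ (g : G) (x : X), t (g • x) = g • t x)
    (P : Measure X) (hprob : IsProbabilityMeasure P)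
    (hinv : ∀ g : G, Measure.map (fun x : X => g • x) P = P) :
    ∃ R : ProbabilityTheory.Kernel Y X, ProbabilityTheory.IsMarkovKernel R ∧
      (∀ B : Set X, MeasurableSet B → ∀ (g : G) (y : Y), R (g • y) (g • B) = R y B) ∧
      (∀ y : Y, R y (t ⁻¹' {y}) = 1) ∧
      (∀ f : X → ℝ, Measurable f → (∃ C : ℝ, ∀ x : X, |f x| ≤ C) →
        ∫ y, ∫ x, f x ∂(R y) ∂(Measure.map t P) = ∫ x, f x ∂P) := by
  borelize G
  have : MulAction.IsPretransitive G Y := ⟨htransY⟩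
  have : Nonempty X := nonempty_of_isProbabilityMeasure P
  have : SMulInvariantMeasure G X P :=
    ⟨fun g B hB => by rw [← Measure.map_apply (measurable_const_smul g) hB, hinv]⟩
  have : SMulInvariantMeasure G Y (P.map t) := smulInvariantMeasure_map P t hequiv htc.measurable
  have : IsProbabilityMeasure (P.map t) := Measure.isProbabilityMeasure_map htc.aemeasurable
  obtain ⟨ν, _, _⟩ := exists_isProbabilityMeasure_isMulRightInvariant G
  refine ⟨Kernel.smulAverage ν (condDistrib id t P), inferInstance,
    fun B hB g y => Kernel.smulAverage_smul_apply g y hB, fun y => ?_, fun f hf ⟨C, hC⟩ => ?_⟩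
  · refine Kernel.smulAverage_apply_preimage_singleton htc.measurable hequiv y ?_
    rw [map_smul_const_eq ν (P.map t) y]
    exact ae_condDistrib_id_preimage_singleton P htc.measurable
  · refine integral_integral_eq_of_comp_eq (Kernel.smulAverage_comp ?_)
      (.of_bound hf.aestronglyMeasurable C (ae_of_all _ hC))
    rw [condDistrib_comp_map htc.aemeasurable aemeasurable_id, Measure.map_id]

/-- Theorem 3.1.  Let `G` be a compact metrizable topological group acting
continuously and transitively with open orbit maps on Polish spaces `X` and `Y`, let
`t : X → Y` be a continuous surjective equivariant map, let `P` be the `G`-invariant Borel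
probability measure on `X` and `Q = t⁎P`.  Then there is a Markov kernel `R` from `Y` to `X`
such that (i) `R(g•B | g•y) = R(B | y)`, (ii) `R(t⁻¹{y} | y) = 1`, and (iii)
`∫∫ f(x) R(dx|y) Q(dy) = ∫ f dP` for all bounded Borel `f`; i.e. `R` is an invariant regular
conditional distribution of `X` given `t(X) = y`. -/
theorem exists_invariant_conditional_kernel (G X Y : Type*)
    [TopologicalSpace G] [Group G] [IsTopologicalGroup G] [CompactSpace G]
    [TopologicalSpace.MetrizableSpace G]
    [TopologicalSpace X] [PolishSpace X] [MeasurableSpace X] [BorelSpace X]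
    [TopologicalSpace Y] [PolishSpace Y] [MeasurableSpace Y] [BorelSpace Y]
    [MulAction G X] [ContinuousSMul G X] [MulAction G Y] [ContinuousSMul G Y]
    (htransX : ∀ x₁ x₂ : X, ∃ g : G, g • x₁ = x₂)
    (htransY : ∀ y₁ y₂ : Y, ∃ g : G, g • y₁ = y₂)
    (hopenX : ∀ x : X, IsOpenMap fun g : G => g • x)
    (hopenY : ∀ y : Y, IsOpenMap fun g : G => g • y)
    (t : X → Y) (htc : Continuous t) (hsurj : Function.Surjective t)
    (hequiv : ∀ (g : G) (x : X), t (g • x) = g • t x)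
    (P : Measure X) (hprob : IsProbabilityMeasure P)
    (hinv : ∀ g : G, Measure.map (fun x : X => g • x) P = P) :
    ∃ R : ProbabilityTheory.Kernel Y X, ProbabilityTheory.IsMarkovKernel R ∧
      (∀ B : Set X, MeasurableSet B → ∀ (g : G) (y : Y), R (g • y) (g • B) = R y B) ∧
      (∀ y : Y, R y (t ⁻¹' {y}) = 1) ∧
      (∀ f : X → ℝ, Measurable f → (∃ C : ℝ, ∀ x : X, |f x| ≤ C) →
        ∫ y, ∫ x, f x ∂(R y) ∂(Measure.map t P) = ∫ x, f x ∂P) :=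
  exists_invariant_conditional_kernel_general G X Y htransY t htc hequiv P hprob hinv
end

section
/- Let G be a compact metrizable topological group acting continuously and transitively on Polish spaces X and Y, let t : X → Y be a continuous surjective equivariant map, fix y₀ ∈ Y and x₀ ∈ X with t(x₀) = y₀, let G₀ = {g ∈ G : g•y₀ = y₀} be the stabilizer of y₀ with Haar probability measure ν on G₀, and let k : Y → G be a Borel measurable map with k(y)•y₀ = y for all y. For Borel B ⊆ X and y ∈ Y define R(B|y) = ν({g₀ ∈ G₀ : k(y)•(g₀•x₀) ∈ B}). Then: (i) R(g•B | g•y) = R(B | y) for all Borel B ⊆ X, g ∈ G, y ∈ Y; and (ii) R(t⁻¹({y}) | y) = 1 for all y ∈ Y. -/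
/-!
Two lifts `a, b` of the same point, `a • y₀ = b • y₀`, differ by the element `a⁻¹ * b` of the
stabilizer `G₀`, and `{g₀ | b • g₀ • x₀ ∈ B}` is the preimage of `{g₀ | a • g₀ • x₀ ∈ B}` under
left multiplication by that element. So by left invariance of `ν`, `R(B | y)` only depends on
`y = k(y) • y₀`, not on the choice of lift `k(y)`; (i) follows since `g⁻¹ * k(g • y)` is another
lift of `y`. For (ii), `t (k(y) • g₀ • x₀) = k(y) • g₀ • y₀ = y` for every `g₀ ∈ G₀`.
-/

open MeasureTheory Pointwise

namespace MulAction

variable {G X Y : Type*} [Group G] [MulAction G X] [MulAction G Y]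

theorem inv_mul_mem_stabilizer_of_smul_eq {a b : G} {y : Y} (h : a • y = b • y) :
    a⁻¹ * b ∈ stabilizer G y := by
  rw [mem_stabilizer_iff, mul_smul, ← h, inv_smul_smul]

theorem preimage_mul_left_setOf_smul_smul_mem (H : Subgroup G) (a : G) (h : H) (x₀ : X)
    (B : Set X) :
    (fun g₀ : H => h * g₀) ⁻¹' {g₀ : H | a • (g₀ : G) • x₀ ∈ B}
      = {g₀ : H | (a * h) • (g₀ : G) • x₀ ∈ B} := by
  ext g₀
  simp only [Set.mem_preimage, Set.mem_ofPred_eq, Subgroup.coe_mul, mul_smul]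

theorem measure_setOf_smul_smul_mem_eq_of_inv_mul_mem {H : Subgroup G} [MeasurableSpace H]
    [MeasurableMul H] (ν : Measure H) [ν.IsMulLeftInvariant] (x₀ : X) (B : Set X) {a b : G}
    (hab : a⁻¹ * b ∈ H) :
    ν {g₀ : H | b • (g₀ : G) • x₀ ∈ B} = ν {g₀ : H | a • (g₀ : G) • x₀ ∈ B} := by
  have hb : b = a * (⟨a⁻¹ * b, hab⟩ : H) := by simp
  rw [hb, ← preimage_mul_left_setOf_smul_smul_mem, measure_preimage_mul]

theorem apply_smul_smul_of_mem_stabilizer {t : X → Y}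
    (ht : ∀ (g : G) (x : X), t (g • x) = g • t x) {x₀ : X} (a : G) {g₀ : G}
    (hg₀ : g₀ ∈ stabilizer G (t x₀)) :
    t (a • g₀ • x₀) = a • t x₀ := by
  rw [ht, ht, hg₀]

end MulAction

theorem kernel_construction_invariant_and_concentrated_general (G X Y : Type*)
    [TopologicalSpace G] [Group G] [IsTopologicalGroup G]
    [MeasurableSpace G] [BorelSpace G]
    [MeasurableSpace X]
    [MulAction G X] [MulAction G Y]
    (t : X → Y)
    (hequiv : ∀ (g : G) (x : X), t (g • x) = g • t x)
    (y₀ : Y) (x₀ : X) (hx₀ : t x₀ = y₀)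
    (ν : Measure (MulAction.stabilizer G y₀)) (hνprob : IsProbabilityMeasure ν)
    (hνinv : ∀ h : MulAction.stabilizer G y₀,
      Measure.map (fun g : MulAction.stabilizer G y₀ => h * g) ν = ν)
    (k : Y → G) (hky : ∀ y : Y, k y • y₀ = y) :
    (∀ B : Set X, MeasurableSet B → ∀ (g : G) (y : Y),
        ν {g₀ : MulAction.stabilizer G y₀ | k (g • y) • ((g₀ : G) • x₀) ∈ g • B}
          = ν {g₀ : MulAction.stabilizer G y₀ | k y • ((g₀ : G) • x₀) ∈ B}) ∧
    (∀ y : Y,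
        ν {g₀ : MulAction.stabilizer G y₀ | k y • ((g₀ : G) • x₀) ∈ t ⁻¹' {y}} = 1) := by
  have : ν.IsMulLeftInvariant := ⟨hνinv⟩
  subst hx₀
  refine ⟨fun B _ g y => ?_, fun y => ?_⟩
  · have hlift : k y • t x₀ = (g⁻¹ * k (g • y)) • t x₀ := by
      rw [hky, mul_smul, hky, inv_smul_smul]
    simpa only [Set.mem_smul_set_iff_inv_smul_mem, mul_smul] using
      MulAction.measure_setOf_smul_smul_mem_eq_of_inv_mul_mem ν x₀ B
        (MulAction.inv_mul_mem_stabilizer_of_smul_eq hlift)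
  · have hall (g₀ : MulAction.stabilizer G (t x₀)) : k y • (g₀ : G) • x₀ ∈ t ⁻¹' {y} := by
      rw [Set.mem_preimage, MulAction.apply_smul_smul_of_mem_stabilizer hequiv _ g₀.2, hky,
        Set.mem_singleton_iff]
    simp only [hall, Set.ofPred_true, measure_univ]

/-- Proposition 3.4.  Let `G` be a compact metrizable topological group
acting continuously and transitively on Polish spaces `X` and `Y`, let `t : X → Y` be a
continuous surjective equivariant map, fix `y₀ ∈ Y` and `x₀ ∈ X` with `t(x₀) = y₀`, let
`G₀ = Stab(y₀)` carry its Haar probability measure `ν`, and let `k : Y → G` be Borel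
measurable with `k(y) • y₀ = y` for all `y`.  Define
`R(B|y) = ν {g₀ ∈ G₀ : k(y) • (g₀ • x₀) ∈ B}`.  Then (i) `R(g•B | g•y) = R(B|y)` for all
Borel `B`, `g`, `y`, and (ii) `R(t⁻¹{y} | y) = 1` for all `y`. -/
theorem kernel_construction_invariant_and_concentrated (G X Y : Type*)
    [TopologicalSpace G] [Group G] [IsTopologicalGroup G] [CompactSpace G]
    [TopologicalSpace.MetrizableSpace G] [MeasurableSpace G] [BorelSpace G]
    [TopologicalSpace X] [PolishSpace X] [MeasurableSpace X] [BorelSpace X]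
    [TopologicalSpace Y] [PolishSpace Y] [MeasurableSpace Y] [BorelSpace Y]
    [MulAction G X] [ContinuousSMul G X] [MulAction G Y] [ContinuousSMul G Y]
    (htransX : ∀ x₁ x₂ : X, ∃ g : G, g • x₁ = x₂)
    (htransY : ∀ y₁ y₂ : Y, ∃ g : G, g • y₁ = y₂)
    (t : X → Y) (htc : Continuous t) (hsurj : Function.Surjective t)
    (hequiv : ∀ (g : G) (x : X), t (g • x) = g • t x)
    (y₀ : Y) (x₀ : X) (hx₀ : t x₀ = y₀)
    (ν : Measure (MulAction.stabilizer G y₀)) (hνprob : IsProbabilityMeasure ν)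
    (hνinv : ∀ h : MulAction.stabilizer G y₀,
      Measure.map (fun g : MulAction.stabilizer G y₀ => h * g) ν = ν)
    (k : Y → G) (hk : Measurable k) (hky : ∀ y : Y, k y • y₀ = y) :
    (∀ B : Set X, MeasurableSet B → ∀ (g : G) (y : Y),
        ν {g₀ : MulAction.stabilizer G y₀ | k (g • y) • ((g₀ : G) • x₀) ∈ g • B}
          = ν {g₀ : MulAction.stabilizer G y₀ | k y • ((g₀ : G) • x₀) ∈ B}) ∧
    (∀ y : Y,
        ν {g₀ : MulAction.stabilizer G y₀ | k y • ((g₀ : G) • x₀) ∈ t ⁻¹' {y}} = 1) :=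
  kernel_construction_invariant_and_concentrated_general G X Y t hequiv y₀ x₀ hx₀ ν hνprob hνinv k
    hky
end
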